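/- arXiv:1708.06295 — 4 statements merged into one kernel-verified Lean document; each statement's English description precedes it below -/
import Mathlib

section
/- Let F = ⟨Tree, ⊴, Choice, R, R_e⟩ be a jstit frame for Ag, let m ∈ Tree, and let S ∈ Θ_m. Then every element of S has a strict ⊴-predecessor: for every m0 ∈ S there exists m1 ∈ Tree with m1 ⊲ m0. -/
/-! Preliminaries: temporal frames, stit frames, jstit frames, the language of
JA-STIT, jstit models, satisfaction, and the Hilbert system Σ_D(CS). -/

/-- A temporal frame: a nonempty set of moments with a partial order satisfying
historical connection and no backward branching. -/
structure TemporalFrame (Mo : Type) : Type where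
  le : Mo → Mo → Prop
  le_refl : ∀ m, le m m
  le_antisymm : ∀ {m m'}, le m m' → le m' m → m = m'
  le_trans : ∀ {m1 m2 m3}, le m1 m2 → le m2 m3 → le m1 m3
  nonempty : Nonempty Mo
  hist_conn : ∀ m m1, ∃ m2, le m2 m ∧ le m2 m1
  no_backward : ∀ m m1 m2, le m1 m → le m2 m → le m1 m2 ∨ le m2 m1

namespace TemporalFrame

variable {Mo : Type} (T : TemporalFrame Mo)

/-- The strict companion of the temporal order. -/
def lt (m m' : Mo) : Prop := T.le m m' ∧ m ≠ m'

/-- A history is a maximal chain of moments w.r.t. the temporal order. -/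
def IsHistory (h : Set Mo) : Prop :=
  IsChain T.le h ∧ ∀ h' : Set Mo, IsChain T.le h' → h ⊆ h' → h' = h

/-- `T.H m` is the set of histories passing through the moment `m`. -/
def H (m : Mo) : Set (Set Mo) := { h | T.IsHistory h ∧ m ∈ h }

/-- Histories `h` and `g` are undivided at `m`. -/
def Undiv (m : Mo) (h g : Set Mo) : Prop := ∃ m', T.lt m m' ∧ m' ∈ h ∧ m' ∈ g

/-- `m'` is an immediate successor of `m`. -/
def Next (m m' : Mo) : Prop := T.lt m m' ∧ ∀ m'', T.lt m'' m' → T.le m'' m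

/-- Mixed successor condition on (the temporal part of) a frame. -/
def MixSucc : Prop :=
  ∀ m m1 : Mo,
    (T.lt m m1 → ∃ m2, T.le m2 m1 ∧ T.Next m m2) ∨
    (∀ h ∈ T.H m, ∀ g ∈ T.H m, T.Undiv m h g)

end TemporalFrame

/-- A stit frame for an agent community `Ag`: a temporal frame together with a choice
function assigning to each moment and agent a partition of the histories through that
moment, subject to no choice between undivided histories and independence of agents. -/
structure StitFrame (Mo : Type) (Ag : Type) extends TemporalFrame Mo where
  choice : Mo → Ag → Set (Set (Set Mo))
  choice_cell_nonempty : ∀ m j C, C ∈ choice m j → C.Nonempty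
  choice_cell_sub : ∀ m j C, C ∈ choice m j → C ⊆ toTemporalFrame.H m
  choice_cover : ∀ m j h, h ∈ toTemporalFrame.H m → ∃ C ∈ choice m j, h ∈ C
  choice_disjoint : ∀ m j C C', C ∈ choice m j → C' ∈ choice m j →
    (C ∩ C').Nonempty → C = C'
  no_choice_undiv : ∀ m j h h', h ∈ toTemporalFrame.H m → h' ∈ toTemporalFrame.H m →
    toTemporalFrame.Undiv m h h' → ∀ C ∈ choice m j, h ∈ C → h' ∈ C
  independence : ∀ m (f : Ag → Set (Set Mo)), (∀ j, f j ∈ choice m j) →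
    (⋂ j, f j).Nonempty

/-- A justification stit (jstit) frame for `Ag`: a stit frame together with two
epistemic preorders `R ⊆ R_e`, with the temporal order included in `R`. -/
structure JstitFrame (Mo : Type) (Ag : Type) extends StitFrame Mo Ag where
  R : Mo → Mo → Prop
  Re : Mo → Mo → Prop
  R_refl : ∀ m, R m m
  R_trans : ∀ {m1 m2 m3}, R m1 m2 → R m2 m3 → R m1 m3
  Re_refl : ∀ m, Re m m
  Re_trans : ∀ {m1 m2 m3}, Re m1 m2 → Re m2 m3 → Re m1 m3
  R_sub_Re : ∀ {m m'}, R m m' → Re m m'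
  le_sub_R : ∀ {m m'}, le m m' → R m m'

namespace JstitFrame

variable {Mo : Type} {Ag : Type} (F : JstitFrame Mo Ag)

/-- The family `Θ_m` of subsets of the set of moments associated with a moment `m`. -/
def Theta (m : Mo) : Set (Set Mo) :=
  { S | m ∈ S ∧
    (∀ m1 m2, m1 ∈ S → F.Re m1 m2 → m2 ∈ S) ∧
    (∀ m1, (∀ h ∈ F.toTemporalFrame.H m1,
        ∃ m2 ∈ h, F.toTemporalFrame.Next m1 m2 ∧ m2 ∈ S) → m1 ∈ S) ∧
    (∀ m1, m1 ∈ S →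
      (∀ m2, F.toTemporalFrame.lt m2 m1 →
        ∃ m3, F.toTemporalFrame.lt m2 m3 ∧ F.toTemporalFrame.lt m3 m1) →
      ∃ m4, F.toTemporalFrame.lt m4 m1 ∧ m4 ∈ S) }

/-- A jstit frame is unirelational iff `R_e ⊆ R`. -/
def Unirelational : Prop := ∀ m m', F.Re m m' → F.R m m'

/-- Regularity of a jstit frame. -/
def Regular : Prop :=
  ∀ m m1 : Mo, F.toTemporalFrame.lt m m1 →
    (∃ S : Set Mo,
      (∀ m0, F.toTemporalFrame.lt m m0 → F.le m0 m1 → S ∈ F.Theta m0) ∧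
      m ∉ S ∧
      ∃ h' ∈ F.toTemporalFrame.H m,
        (∀ g ∈ F.toTemporalFrame.H m1, ¬ F.toTemporalFrame.Undiv m h' g) ∧
        (∀ m' ∈ h', F.toTemporalFrame.Next m m' → m' ∉ S)) →
    ∃ m2, F.le m2 m1 ∧ F.toTemporalFrame.Next m m2

end JstitFrame

/-- Proof polynomials over proof variables `PVar` and proof constants `PConst`. -/
inductive Pol (PVar PConst : Type) : Type
  | var : PVar → Pol PVar PConst
  | const : PConst → Pol PVar PConst
  | plus : Pol PVar PConst → Pol PVar PConst → Pol PVar PConst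
  | times : Pol PVar PConst → Pol PVar PConst → Pol PVar PConst
  | bang : Pol PVar PConst → Pol PVar PConst

/-- Formulas of JA-STIT. -/
inductive Form (Ag PVar PConst PropVar : Type) : Type
  | pv : PropVar → Form Ag PVar PConst PropVar
  | and : Form Ag PVar PConst PropVar → Form Ag PVar PConst PropVar →
      Form Ag PVar PConst PropVar
  | neg : Form Ag PVar PConst PropVar → Form Ag PVar PConst PropVar
  | stit : Ag → Form Ag PVar PConst PropVar → Form Ag PVar PConst PropVar
  | box : Form Ag PVar PConst PropVar → Form Ag PVar PConst PropVar
  | proves : Pol PVar PConst → Form Ag PVar PConst PropVar → Form Ag PVar PConst PropVar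
  | know : Form Ag PVar PConst PropVar → Form Ag PVar PConst PropVar
  | ann : Pol PVar PConst → Form Ag PVar PConst PropVar

namespace Form

variable {Ag PVar PConst PropVar : Type}

/-- Implication, defined as usual from `¬` and `∧`. -/
def imp (A B : Form Ag PVar PConst PropVar) : Form Ag PVar PConst PropVar :=
  neg (and A (neg B))

/-- Disjunction, defined as usual. -/
def or (A B : Form Ag PVar PConst PropVar) : Form Ag PVar PConst PropVar :=
  neg (and (neg A) (neg B))

/-- The dual `◇` of the historical necessity modality. -/
def dia (A : Form Ag PVar PConst PropVar) : Form Ag PVar PConst PropVar :=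
  neg (box (neg A))

/-- Falsum, defined as usual. -/
def bot [Inhabited PropVar] : Form Ag PVar PConst PropVar :=
  and (pv default) (neg (pv default))

end Form

/-- Conjunction of a nonempty list of formulas (head plus tail). -/
def andList {Ag PVar PConst PropVar : Type} :
    Form Ag PVar PConst PropVar → List (Form Ag PVar PConst PropVar) →
      Form Ag PVar PConst PropVar
  | A, [] => A
  | A, B :: L => Form.and A (andList B L)

/-- Disjunction of a list of formulas. -/
def bigOr {Ag PVar PConst PropVar : Type} [Inhabited PropVar] :
    List (Form Ag PVar PConst PropVar) → Form Ag PVar PConst PropVar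
  | [] => Form.bot
  | [A] => A
  | A :: B :: L => Form.or A (bigOr (B :: L))

/-- A classical propositional tautology: a formula true under every Boolean valuation
commuting with `∧` and `¬` (all other formulas being treated as atoms). -/
def Tautology {Ag PVar PConst PropVar : Type} (A : Form Ag PVar PConst PropVar) : Prop :=
  ∀ v : Form Ag PVar PConst PropVar → Bool,
    (∀ B C, v (Form.and B C) = (v B && v C)) →
    (∀ B, v (Form.neg B) = !v B) →
    v A = true

/-- The axiom schemes (A0)–(A9) of Σ_D. -/
inductive Ax {Ag PVar PConst PropVar : Type} : Form Ag PVar PConst PropVar → Prop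
  -- (A0) classical propositional tautologies
  | a0 {A} : Tautology A → Ax A
  -- (A1) S5 axioms for □
  | boxK {A B} : Ax (Form.imp (Form.box (Form.imp A B))
      (Form.imp (Form.box A) (Form.box B)))
  | boxT {A} : Ax (Form.imp (Form.box A) A)
  | box4 {A} : Ax (Form.imp (Form.box A) (Form.box (Form.box A)))
  | box5 {A} : Ax (Form.imp (Form.neg (Form.box A)) (Form.box (Form.neg (Form.box A))))
  -- (A1) S5 axioms for each [j]
  | stitK {j : Ag} {A B} : Ax (Form.imp (Form.stit j (Form.imp A B))
      (Form.imp (Form.stit j A) (Form.stit j B)))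
  | stitT {j : Ag} {A} : Ax (Form.imp (Form.stit j A) A)
  | stit4 {j : Ag} {A} : Ax (Form.imp (Form.stit j A) (Form.stit j (Form.stit j A)))
  | stit5 {j : Ag} {A} : Ax (Form.imp (Form.neg (Form.stit j A))
      (Form.stit j (Form.neg (Form.stit j A))))
  -- (A2)
  | a2 {j : Ag} {A} : Ax (Form.imp (Form.box A) (Form.stit j A))
  -- (A3), for pairwise distinct agents
  | a3 {p : Ag × Form Ag PVar PConst PropVar} {L : List (Ag × Form Ag PVar PConst PropVar)} :
      (((p :: L).map Prod.fst).Nodup) →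
      Ax (Form.imp
        (andList (Form.dia (Form.stit p.1 p.2)) (L.map fun q => Form.dia (Form.stit q.1 q.2)))
        (Form.dia (andList (Form.stit p.1 p.2) (L.map fun q => Form.stit q.1 q.2))))
  -- (A4)
  | a4 {s t : Pol PVar PConst} {A B} : Ax (Form.imp (Form.proves s (Form.imp A B))
      (Form.imp (Form.proves t A) (Form.proves (Pol.times s t) B)))
  -- (A5)
  | a5 {t : Pol PVar PConst} {A} : Ax (Form.imp (Form.proves t A)
      (Form.and (Form.proves (Pol.bang t) (Form.proves t A)) (Form.know A)))
  -- (A6)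
  | a6 {s t : Pol PVar PConst} {A} : Ax (Form.imp
      (Form.or (Form.proves s A) (Form.proves t A)) (Form.proves (Pol.plus s t) A))
  -- (A7) S4 axioms for K
  | knowK {A B} : Ax (Form.imp (Form.know (Form.imp A B))
      (Form.imp (Form.know A) (Form.know B)))
  | knowT {A} : Ax (Form.imp (Form.know A) A)
  | know4 {A} : Ax (Form.imp (Form.know A) (Form.know (Form.know A)))
  -- (A8)
  | a8 {A} : Ax (Form.imp (Form.know A) (Form.box (Form.know (Form.box A))))
  -- (A9)
  | a9 {t : Pol PVar PConst} : Ax (Form.imp (Form.box (Form.ann t))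
      (Form.know (Form.box (Form.ann t))))

/-- Iterated prefixes `c_n : … : c_1 : A` of instances `A` of the axiom schemes. -/
inductive ConstIter {Ag PVar PConst PropVar : Type} : Form Ag PVar PConst PropVar → Prop
  | base {c : PConst} {A} : Ax A → ConstIter (Form.proves (Pol.const c) A)
  | step {c : PConst} {B} : ConstIter B → ConstIter (Form.proves (Pol.const c) B)

/-- A constant specification: a set of formulas of the form `c_n : … : c_1 : A` with `A`
an instance of (A0)–(A9), closed under deleting the outermost constant. -/
def IsConstSpec {Ag PVar PConst PropVar : Type}
    (CS : Set (Form Ag PVar PConst PropVar)) : Prop :=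
  (∀ B ∈ CS, ConstIter B) ∧
  ∀ (c c' : PConst) (B : Form Ag PVar PConst PropVar),
    Form.proves (Pol.const c) (Form.proves (Pol.const c') B) ∈ CS →
    Form.proves (Pol.const c') B ∈ CS

/-- Provability in Σ_D(CS): axioms (A0)–(A9), modus ponens (R1), K-necessitation (R2),
the rule (R_D) and the rule (R_CS). -/
inductive Proves {Ag PVar PConst PropVar : Type} [Inhabited PropVar]
    (CS : Set (Form Ag PVar PConst PropVar)) : Form Ag PVar PConst PropVar → Prop
  | ax {A} : Ax A → Proves CS A
  | mp {A B} : Proves CS (Form.imp A B) → Proves CS A → Proves CS B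
  | nec {A} : Proves CS A → Proves CS (Form.know A)
  | rd {A : Form Ag PVar PConst PropVar} {ts ss : List (Pol PVar PConst)}
      (hne : ts ++ ss ≠ []) :
      Proves CS (Form.imp (Form.know A)
        (bigOr ((ts.map fun t => Form.neg (Form.box (Form.ann t))) ++
                (ss.map fun s => Form.box (Form.ann s))))) →
      Proves CS (Form.imp (Form.know A)
        (bigOr ((ts.map fun t => Form.neg (Form.ann t)) ++
                (ss.map fun s => Form.ann s))))
  | rcs {B} : B ∈ CS → Proves CS B

/-- Γ is consistent in Σ_D(CS): no finite nonempty conjunction of members of Γ provably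
implies falsum. -/
def CSConsistent {Ag PVar PConst PropVar : Type} [Inhabited PropVar]
    (CS Γ : Set (Form Ag PVar PConst PropVar)) : Prop :=
  ¬ ∃ (A : Form Ag PVar PConst PropVar) (L : List (Form Ag PVar PConst PropVar)),
      A ∈ Γ ∧ (∀ B ∈ L, B ∈ Γ) ∧ Proves CS (Form.imp (andList A L) Form.bot)

/-- A jstit model for `Ag`: a jstit frame together with `Act`, an admissible evidence
function `E` and an evaluation `V`, subject to the semantical constraints. -/
structure JstitModel (Mo : Type) (Ag PVar PConst PropVar : Type)
    extends JstitFrame Mo Ag where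
  act : Mo → Set Mo → Set (Pol PVar PConst)
  ev : Mo → Pol PVar PConst → Set (Form Ag PVar PConst PropVar)
  val : PropVar → Set (Mo × Set Mo)
  -- monotonicity of evidence
  ev_mono : ∀ m m' t, Re m m' → ev m t ⊆ ev m' t
  -- evidence closure properties
  ev_app : ∀ m s t A B, Form.imp A B ∈ ev m s → A ∈ ev m t → B ∈ ev m (Pol.times s t)
  ev_sum_left : ∀ m s t, ev m s ⊆ ev m (Pol.plus s t)
  ev_sum_right : ∀ m s t, ev m t ⊆ ev m (Pol.plus s t)
  ev_bang : ∀ m t A, A ∈ ev m t → Form.proves t A ∈ ev m (Pol.bang t)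
  -- expansion of presented proofs
  expansion : ∀ m m' h, toTemporalFrame.lt m' m → h ∈ toTemporalFrame.H m →
    act m' h ⊆ act m h
  -- no new proofs guaranteed
  no_new : ∀ m t, (∀ h ∈ toTemporalFrame.H m, t ∈ act m h) →
    ∃ m' h, toTemporalFrame.lt m' m ∧ h ∈ toTemporalFrame.H m ∧ t ∈ act m' h
  -- presenting a new proof makes histories divide
  divide : ∀ m h h', h ∈ toTemporalFrame.H m → h' ∈ toTemporalFrame.H m →
    toTemporalFrame.Undiv m h h' → act m h = act m h'
  -- presented proofs are epistemically transparent
  transparent : ∀ m m' t, Re m m' → (∀ h ∈ toTemporalFrame.H m, t ∈ act m h) →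
    ∀ h' ∈ toTemporalFrame.H m', t ∈ act m' h'

namespace JstitModel

variable {Mo Ag PVar PConst PropVar : Type}

/-- `Act_m`, the set of proofs presented at `m` under every history through `m`. -/
def ActM (M : JstitModel Mo Ag PVar PConst PropVar) (m : Mo) : Set (Pol PVar PConst) :=
  { t | ∀ h ∈ M.toTemporalFrame.H m, t ∈ M.act m h }

/-- The satisfaction relation for jstit models. -/
def Sat (M : JstitModel Mo Ag PVar PConst PropVar) :
    Form Ag PVar PConst PropVar → Mo → Set Mo → Prop
  | Form.pv p, m, h => (m, h) ∈ M.val p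
  | Form.and A B, m, h => M.Sat A m h ∧ M.Sat B m h
  | Form.neg A, m, h => ¬ M.Sat A m h
  | Form.stit j A, m, h => ∀ h' C, C ∈ M.choice m j → h ∈ C → h' ∈ C → M.Sat A m h'
  | Form.box A, m, _ => ∀ h' ∈ M.toTemporalFrame.H m, M.Sat A m h'
  | Form.know A, m, _ => ∀ m' h', M.R m m' → h' ∈ M.toTemporalFrame.H m' → M.Sat A m' h'
  | Form.proves t A, m, _ => A ∈ M.ev m t ∧
      ∀ m' h', M.Re m m' → h' ∈ M.toTemporalFrame.H m' → M.Sat A m' h'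
  | Form.ann t, m, h => t ∈ M.act m h

/-- Validity of a formula in a jstit model. -/
def Valid (M : JstitModel Mo Ag PVar PConst PropVar)
    (A : Form Ag PVar PConst PropVar) : Prop :=
  ∀ m h, h ∈ M.toTemporalFrame.H m → M.Sat A m h

end JstitModel

/-- CS-normality of a jstit model. -/
def CSNormal {Mo Ag PVar PConst PropVar : Type}
    (CS : Set (Form Ag PVar PConst PropVar))
    (M : JstitModel Mo Ag PVar PConst PropVar) : Prop :=
  ∀ (c : PConst) (m : Mo) (A : Form Ag PVar PConst PropVar),
    Form.proves (Pol.const c) A ∈ CS → A ∈ M.ev m (Pol.const c)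

theorem stmt0_general {Mo Ag : Type} (F : JstitFrame Mo Ag) (m : Mo)
    (S : Set Mo) (hS : S ∈ F.Theta m) :
    ∀ m0 ∈ S, ∃ m1 : Mo, F.toTemporalFrame.lt m1 m0 := by
  intro m0 hm0
  by_contra! hminimal
  -- For a minimal `m0` the density premise of clause (4) of `Θ_m` holds vacuously.
  obtain ⟨m4, hm4, -⟩ := hS.2.2.2 m0 hm0 fun m2 h2 => (hminimal m2 h2).elim
  exact hminimal m4 hm4

/-- Lemma 1: every element of a member `S` of `Θ_m` has a strict
temporal predecessor. -/
theorem stmt0 {Mo Ag : Type} [Finite Ag] (F : JstitFrame Mo Ag) (m : Mo)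
    (S : Set Mo) (hS : S ∈ F.Theta m) :
    ∀ m0 ∈ S, ∃ m1 : Mo, F.toTemporalFrame.lt m1 m0 :=
  stmt0_general F m S hS
end

section
/- Let F = ⟨Tree, ⊴, Choice, R, R_e⟩ be a jstit frame for Ag whose stit reduct C = ⟨Tree, ⊴, Choice⟩ is a mixed successor frame. Then F is regular. -/
namespace TemporalFrame

variable {Mo : Type} (T : TemporalFrame Mo)

theorem isHistory_of_isMaxChain {h : Set Mo} (hh : IsMaxChain T.le h) : T.IsHistory h :=
  ⟨hh.1, fun _ hc hsub => (hh.2 hc hsub).symm⟩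

theorem exists_mem_H_of_le {m m1 : Mo} (hle : T.le m m1) : ∃ g ∈ T.H m, g ∈ T.H m1 := by
  obtain ⟨g, hg, hsub⟩ := (IsChain.pair hle : IsChain T.le {m, m1}).exists_maxChain
  have hgh := T.isHistory_of_isMaxChain hg
  exact ⟨g, ⟨hgh, hsub (Set.mem_insert m {m1})⟩, ⟨hgh, hsub (Set.mem_insert_of_mem m rfl)⟩⟩

end TemporalFrame

theorem stmt5_general {Mo Ag : Type} (F : JstitFrame Mo Ag)
    (hmix : F.toTemporalFrame.MixSucc) : F.Regular := by
  intro m m1 hlt ⟨_, _, _, h', hh', hdivided, _⟩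
  refine (hmix m m1).elim (· hlt) fun hundiv => ?_
  obtain ⟨g, hgm, hgm1⟩ := F.exists_mem_H_of_le hlt.1
  exact absurd (hundiv h' hh' g hgm) (hdivided g hgm1)

/-- Lemma 4.1: if the stit reduct of a jstit frame is a mixed successor
frame, then the jstit frame is regular. -/
theorem stmt5 {Mo Ag : Type} [Finite Ag] (F : JstitFrame Mo Ag)
    (hmix : F.toTemporalFrame.MixSucc) : F.Regular :=
  stmt5_general F hmix
end

section
/- Let C = ⟨Tree, ⊴, Choice⟩ be a stit frame for Ag that is not a mixed successor frame, and let F = ⟨Tree, ⊴, Choice, R, R_e⟩ with R = R_e = Tree × Tree. Then F is a jstit frame for Ag, F is regular, and the stit reduct of F is not a mixed successor frame. -/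
namespace StitFrame

variable {Mo Ag : Type}

def withTotalRelations (C : StitFrame Mo Ag) : JstitFrame Mo Ag :=
  { C with
    R := fun _ _ => True, Re := fun _ _ => True,
    R_refl := fun _ => trivial, R_trans := fun _ _ => trivial,
    Re_refl := fun _ => trivial, Re_trans := fun _ _ => trivial,
    R_sub_Re := fun _ => trivial, le_sub_R := fun _ => trivial }

end StitFrame

namespace JstitFrame

variable {Mo Ag : Type} (F : JstitFrame Mo Ag)

theorem eq_univ_of_mem_Theta (hRe : ∀ m m', F.Re m m') {m : Mo} {S : Set Mo}
    (hS : S ∈ F.Theta m) : S = Set.univ :=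
  Set.eq_univ_of_forall fun m' => hS.2.1 m m' hS.1 (hRe m m')

/-- Vacuously: the antecedent `m ∉ S` of regularity is never met. -/
theorem regular_of_Re_total (hRe : ∀ m m', F.Re m m') : F.Regular := by
  rintro m m1 hlt ⟨S, hTheta, hmS, -⟩
  rw [F.eq_univ_of_mem_Theta hRe (hTheta m1 hlt (F.le_refl m1))] at hmS
  exact absurd (Set.mem_univ m) hmS

end JstitFrame

theorem stmt6_general {Mo Ag : Type} (C : StitFrame Mo Ag)
    (hC : ¬ C.toTemporalFrame.MixSucc) :
    ∃ F : JstitFrame Mo Ag, F.toStitFrame = C ∧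
      F.R = (fun _ _ => True) ∧ F.Re = (fun _ _ => True) ∧
      F.Regular ∧ ¬ F.toStitFrame.toTemporalFrame.MixSucc :=
  ⟨C.withTotalRelations, rfl, rfl, rfl,
    C.withTotalRelations.regular_of_Re_total fun _ _ => trivial, hC⟩

/-- Lemma 4.2: extending a non-mixed-successor stit frame with the total
relations `R = R_e = Tree × Tree` yields a regular jstit frame whose stit reduct is not
a mixed successor frame. -/
theorem stmt6 {Mo Ag : Type} [Finite Ag] (C : StitFrame Mo Ag)
    (hC : ¬ C.toTemporalFrame.MixSucc) :
    ∃ F : JstitFrame Mo Ag, F.toStitFrame = C ∧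
      F.R = (fun _ _ => True) ∧ F.Re = (fun _ _ => True) ∧
      F.Regular ∧ ¬ F.toStitFrame.toTemporalFrame.MixSucc :=
  stmt6_general C hC
end

section
/- Let CS be a constant specification, let x and y be distinct proof variables, and let C = ⟨Tree, ⊴, Choice⟩ be a stit frame for Ag that is not a mixed successor frame. Then there is a CS-normal jstit model M based on C and a moment-history pair (m, h) of M such that M, m, h ⊭ K(□Ex ∨ ¬□Ey) → (Ex ∨ ¬Ey). -/
/-!
Outside the mixed successor class there are a moment `m` and a history `h` through it such
that `h` goes on beyond `m` without passing through an immediate successor of `m`, while some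
history through `m` is divided from `h` at `m`. Present `x` and `y` at every moment above a moment
of `h` later than `m`, and `y` also at `m` itself on the histories undivided from `h`; take
`R = R_e = ⊴` and let every proof accept every formula. Then `y` is settled only where `x` is,
so `K(□Ex ∨ ¬□Ey)` holds at `(m, h)`, while `Ey` holds and `Ex` fails there. Since `h` has no
immediate successor of `m`, every moment of the region where `x` and `y` are presented has an
earlier one in it, which is what "no new proofs guaranteed" asks for.
-/

namespace TemporalFrame

variable {Mo : Type} (T : TemporalFrame Mo)

theorem exists_isHistory_superset {s : Set Mo} (hs : IsChain T.le s) :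
    ∃ h, T.IsHistory h ∧ s ⊆ h := by
  obtain ⟨h, hmax, hsub⟩ := hs.exists_maxChain
  exact ⟨h, ⟨hmax.1, fun h' hc hsub' => (hmax.2 hc hsub').symm⟩, hsub⟩

theorem H_nonempty (m : Mo) : (T.H m).Nonempty := by
  obtain ⟨h, hh, hsub⟩ := T.exists_isHistory_superset (IsChain.singleton (a := m))
  exact ⟨h, hh, hsub rfl⟩

variable {T}

theorem IsHistory.mem_of_le {h : Set Mo} (hh : T.IsHistory h) {m m' : Mo} (hm : m ∈ h)
    (hle : T.le m' m) : m' ∈ h := by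
  have hcomp : ∀ c ∈ h, m' ≠ c → T.le m' c ∨ T.le c m' := by
    intro c hc _
    rcases eq_or_ne c m with rfl | hcm
    · exact Or.inl hle
    rcases hh.1 hc hm hcm with hcm | hmc
    · exact (T.no_backward m c m' hcm hle).symm
    · exact Or.inl (T.le_trans hle hmc)
  rw [← hh.2 _ (hh.1.insert hcomp) (Set.subset_insert _ _)]
  exact Set.mem_insert _ _

theorem Undiv.symm {m : Mo} {h g : Set Mo} (hu : T.Undiv m h g) : T.Undiv m g h :=
  let ⟨a, hma, hah, hag⟩ := hu
  ⟨a, hma, hag, hah⟩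

theorem Undiv.trans {m : Mo} {h₁ h₂ h₃ : Set Mo} (hh₁ : T.IsHistory h₁) (hh₂ : IsChain T.le h₂)
    (hh₃ : T.IsHistory h₃) (hu₁₂ : T.Undiv m h₁ h₂) (hu₂₃ : T.Undiv m h₂ h₃) :
    T.Undiv m h₁ h₃ := by
  obtain ⟨a, hma, ha₁, ha₂⟩ := hu₁₂
  obtain ⟨b, hmb, hb₂, hb₃⟩ := hu₂₃
  rcases eq_or_ne a b with rfl | hab
  · exact ⟨a, hma, ha₁, hb₃⟩
  rcases hh₂ ha₂ hb₂ hab with hle | hle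
  · exact ⟨a, hma, ha₁, hh₃.mem_of_le hb₃ hle⟩
  · exact ⟨b, hmb, hh₁.mem_of_le ha₁ hle, hb₃⟩

theorem exists_lt_lt_of_not_next {m a : Mo} (hlt : T.lt m a) (hnext : ¬ T.Next m a) :
    ∃ b, T.lt m b ∧ T.lt b a := by
  obtain ⟨b, hba, hbm⟩ : ∃ b, T.lt b a ∧ ¬ T.le b m := by
    simpa [Next, hlt] using hnext
  rcases T.no_backward a b m hba.1 hlt.1 with hle | hle
  · exact absurd hle hbm
  · exact ⟨b, ⟨hle, fun hmb => hbm (hmb ▸ T.le_refl m)⟩, hba⟩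

variable (T)

structure NonMixSuccWitness (m : Mo) (h : Set Mo) : Prop where
  mem_H : h ∈ T.H m
  exists_lt : ∃ a ∈ h, T.lt m a
  exists_between : ∀ a ∈ h, T.lt m a → ∃ b, T.lt m b ∧ T.lt b a
  exists_divided : ∃ g ∈ T.H m, ¬ T.Undiv m g h

theorem exists_nonMixSuccWitness (hT : ¬ T.MixSucc) : ∃ m h, T.NonMixSuccWitness m h := by
  simp only [MixSucc] at hT
  push Not at hT
  obtain ⟨m, m₁, ⟨hlt, hnext⟩, h₀, hh₀, g₀, hg₀, hdiv⟩ := hT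
  obtain ⟨h, hh, hm₁⟩ := T.H_nonempty m₁
  have hm : m ∈ h := hh.mem_of_le hm₁ hlt.1
  refine ⟨m, h, ⟨⟨hh, hm⟩, ⟨m₁, hm₁, hlt⟩, fun a ha hma => ?_, ?_⟩⟩
  · refine exists_lt_lt_of_not_next hma fun hna => ?_
    rcases eq_or_ne a m₁ with rfl | ham₁
    · exact hnext a (T.le_refl a) hna
    rcases hh.1 ha hm₁ ham₁ with hle | hle
    · exact hnext a hle hna
    · exact hlt.2 (T.le_antisymm hlt.1 (hna.2 m₁ ⟨hle, ham₁.symm⟩))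
  · by_contra! hundiv
    exact hdiv ((hundiv h₀ hh₀).trans hh₀.1 hh.1 hg₀.1 (hundiv g₀ hg₀).symm)

def Beyond (m : Mo) (h : Set Mo) (m' : Mo) : Prop :=
  ∃ a ∈ h, T.lt m a ∧ T.le a m'

variable {T}

theorem Beyond.mono {m m' m'' : Mo} {h : Set Mo} (hb : T.Beyond m h m') (hle : T.le m' m'') :
    T.Beyond m h m'' :=
  let ⟨a, ha, hma, ham'⟩ := hb
  ⟨a, ha, hma, T.le_trans ham' hle⟩

theorem not_beyond_self {m : Mo} {h : Set Mo} : ¬ T.Beyond m h m :=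
  fun ⟨_, _, hma, ham⟩ => hma.2 (T.le_antisymm hma.1 ham)

theorem Beyond.exists_lt {m m' : Mo} {h : Set Mo} (hw : T.NonMixSuccWitness m h)
    (hb : T.Beyond m h m') : ∃ m'', T.lt m'' m' ∧ T.Beyond m h m'' := by
  obtain ⟨a, ha, hma, hle⟩ := hb
  rcases eq_or_ne a m' with rfl | hne
  · obtain ⟨b, hmb, hba⟩ := hw.exists_between a ha hma
    exact ⟨b, hba, b, hw.mem_H.1.mem_of_le ha hba.1, hmb, T.le_refl b⟩
  · exact ⟨a, ⟨hle, hne⟩, a, ha, hma, T.le_refl a⟩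

theorem beyond_of_undiv {m m' : Mo} {h h' : Set Mo} (hh : T.IsHistory h) (hh' : h' ∈ T.H m')
    (hlt : T.lt m m') (hu : T.Undiv m h' h) : T.Beyond m h m' := by
  obtain ⟨b, hmb, hbh', hbh⟩ := hu
  rcases eq_or_ne b m' with rfl | hbm'
  · exact ⟨b, hbh, hmb, T.le_refl b⟩
  rcases hh'.1.1 hbh' hh'.2 hbm' with hle | hle
  · exact ⟨b, hbh, hmb, hle⟩
  · exact ⟨m', hh.mem_of_le hbh hle, hlt, T.le_refl m'⟩

variable {PVar PConst : Type}

variable (T) in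
def counterAct (m : Mo) (h : Set Mo) (x y : PVar) (m' : Mo) (h' : Set Mo) :
    Set (Pol PVar PConst) :=
  {t | T.Beyond m h m' ∧ (t = Pol.var x ∨ t = Pol.var y) ∨
    m' = m ∧ T.Undiv m h' h ∧ t = Pol.var y}

variable {m : Mo} {h : Set Mo} {x y : PVar}

theorem counterAct_subset_of_lt {m' m'' : Mo} {h' : Set Mo} (hh : T.IsHistory h)
    (hlt : T.lt m' m'') (hh' : h' ∈ T.H m'') :
    (T.counterAct m h x y m' h' : Set (Pol PVar PConst)) ⊆ T.counterAct m h x y m'' h' := by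
  rintro t (⟨hb, ht⟩ | ⟨rfl, hu, rfl⟩)
  · exact Or.inl ⟨hb.mono hlt.1, ht⟩
  · exact Or.inl ⟨beyond_of_undiv hh hh' hlt hu, Or.inr rfl⟩

theorem counterAct_subset_of_undiv {m' : Mo} {h₁ h₂ : Set Mo} (hh : T.IsHistory h)
    (hh₁ : IsChain T.le h₁) (hh₂ : T.IsHistory h₂) (hu : T.Undiv m' h₁ h₂) :
    (T.counterAct m h x y m' h₁ : Set (Pol PVar PConst)) ⊆ T.counterAct m h x y m' h₂ := by
  rintro t (ht | ⟨rfl, hu₁, rfl⟩)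
  · exact Or.inl ht
  · exact Or.inr ⟨rfl, hu.symm.trans hh₂ hh₁ hh hu₁, rfl⟩

theorem beyond_of_forall_mem_counterAct {m' : Mo} {t : Pol PVar PConst}
    (hdiv : ∃ g ∈ T.H m, ¬ T.Undiv m g h)
    (hall : ∀ h' ∈ T.H m', t ∈ T.counterAct m h x y m' h') :
    T.Beyond m h m' ∧ (t = Pol.var x ∨ t = Pol.var y) := by
  obtain ⟨g, hg, hgh⟩ := hdiv
  obtain ⟨h', hh'⟩ := T.H_nonempty m'
  rcases hall h' hh' with ht | ⟨rfl, -, -⟩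
  · exact ht
  rcases hall g hg with ht | ⟨-, hu, -⟩
  · exact ht
  · exact absurd hu hgh

end TemporalFrame

namespace JstitModel

variable {Mo Ag PVar PConst PropVar : Type} (M : JstitModel Mo Ag PVar PConst PropVar)
  {A B : Form Ag PVar PConst PropVar} {m : Mo} {h : Set Mo}

theorem sat_imp : M.Sat (A.imp B) m h ↔ (M.Sat A m h → M.Sat B m h) := by
  simp only [Form.imp, Sat, not_and, not_not]

theorem sat_or : M.Sat (A.or B) m h ↔ M.Sat A m h ∨ M.Sat B m h := by
  simp only [Form.or, Sat, not_and, not_not]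
  tauto

end JstitModel

namespace StitFrame

open TemporalFrame

variable {Mo Ag PVar PConst PropVar : Type} (C : StitFrame Mo Ag) {m : Mo} {h : Set Mo}

def counterModel (hw : C.NonMixSuccWitness m h) (x y : PVar) :
    JstitModel Mo Ag PVar PConst PropVar where
  toStitFrame := C
  R := C.le
  Re := C.le
  R_refl := C.le_refl
  R_trans := C.le_trans
  Re_refl := C.le_refl
  Re_trans := C.le_trans
  R_sub_Re := id
  le_sub_R := id
  act := C.counterAct m h x y
  ev _ _ := Set.univ
  val _ := ∅
  ev_mono _ _ _ _ := Set.subset_univ _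
  ev_app _ _ _ _ _ _ _ := Set.mem_univ _
  ev_sum_left _ _ _ := Set.subset_univ _
  ev_sum_right _ _ _ := Set.subset_univ _
  ev_bang _ _ _ _ := Set.mem_univ _
  expansion _ _ _ hlt hh' := counterAct_subset_of_lt hw.mem_H.1 hlt hh'
  no_new m' t hall := by
    obtain ⟨hb, ht⟩ := beyond_of_forall_mem_counterAct hw.exists_divided hall
    obtain ⟨m'', hlt, hb''⟩ := hb.exists_lt hw
    obtain ⟨h', hh'⟩ := C.H_nonempty m'
    exact ⟨m'', h', hlt, hh', Or.inl ⟨hb'', ht⟩⟩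
  divide _ _ _ hh₁ hh₂ hu :=
    (counterAct_subset_of_undiv hw.mem_H.1 hh₁.1.1 hh₂.1 hu).antisymm
      (counterAct_subset_of_undiv hw.mem_H.1 hh₂.1.1 hh₁.1 hu.symm)
  transparent _ _ _ hle hall _ _ := by
    obtain ⟨hb, ht⟩ := beyond_of_forall_mem_counterAct hw.exists_divided hall
    exact Or.inl ⟨hb.mono hle, ht⟩

theorem csNormal_counterModel (CS : Set (Form Ag PVar PConst PropVar))
    (hw : C.NonMixSuccWitness m h) (x y : PVar) : CSNormal CS (C.counterModel hw x y) :=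
  fun _ _ _ _ => Set.mem_univ _

theorem counterModel_not_sat (hw : C.NonMixSuccWitness m h) {x y : PVar} (hxy : x ≠ y) :
    ¬ (C.counterModel hw x y : JstitModel Mo Ag PVar PConst PropVar).Sat (Form.imp
        (Form.know (Form.or (Form.box (Form.ann (Pol.var x)))
          (Form.neg (Form.box (Form.ann (Pol.var y))))))
        (Form.or (Form.ann (Pol.var x)) (Form.neg (Form.ann (Pol.var y))))) m h := by
  simp only [JstitModel.sat_imp, JstitModel.sat_or, Classical.not_imp, not_or]
  refine ⟨fun m' h' _ _ => ?_, ?_, ?_⟩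
  · simp only [JstitModel.sat_or, JstitModel.Sat]
    by_cases hb : C.Beyond m h m'
    · exact Or.inl fun _ _ => Or.inl ⟨hb, Or.inl rfl⟩
    · exact Or.inr fun hall =>
        hb (beyond_of_forall_mem_counterAct hw.exists_divided hall).1
  · rintro (⟨hb, -⟩ | ⟨-, -, hxy'⟩)
    · exact not_beyond_self hb
    · exact hxy (Pol.var.inj hxy')
  · obtain ⟨a, ha, hma⟩ := hw.exists_lt
    simp only [JstitModel.Sat, not_not]
    exact Or.inr ⟨rfl, ⟨a, hma, ha, ha⟩, rfl⟩

end StitFrame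

theorem stmt9_general {Mo Ag PVar PConst PropVar : Type}
    (CS : Set (Form Ag PVar PConst PropVar))
    (x y : PVar) (hxy : x ≠ y)
    (C : StitFrame Mo Ag) (hC : ¬ C.toTemporalFrame.MixSucc) :
    ∃ M : JstitModel Mo Ag PVar PConst PropVar,
      M.toJstitFrame.toStitFrame = C ∧ CSNormal CS M ∧
      ∃ m h, h ∈ M.toTemporalFrame.H m ∧
        ¬ M.Sat (Form.imp
            (Form.know (Form.or (Form.box (Form.ann (Pol.var x)))
              (Form.neg (Form.box (Form.ann (Pol.var y))))))
            (Form.or (Form.ann (Pol.var x)) (Form.neg (Form.ann (Pol.var y))))) m h := by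
  obtain ⟨m, h, hw⟩ := C.exists_nonMixSuccWitness hC
  exact ⟨C.counterModel hw x y, rfl, C.csNormal_counterModel CS hw x y, m, h, hw.mem_H,
    C.counterModel_not_sat hw hxy⟩

/-- Lemma 5: every stit frame outside the mixed successor class carries a
CS-normal jstit model falsifying `K(□Ex ∨ ¬□Ey) → (Ex ∨ ¬Ey)` at some moment-history
pair. -/
theorem stmt9 {Mo Ag PVar PConst PropVar : Type} [Finite Ag]
    [Countable PVar] [Infinite PVar] [Countable PConst] [Infinite PConst]
    [Countable PropVar] [Infinite PropVar] [Inhabited PropVar]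
    (CS : Set (Form Ag PVar PConst PropVar)) (hCS : IsConstSpec CS)
    (x y : PVar) (hxy : x ≠ y)
    (C : StitFrame Mo Ag) (hC : ¬ C.toTemporalFrame.MixSucc) :
    ∃ M : JstitModel Mo Ag PVar PConst PropVar,
      M.toJstitFrame.toStitFrame = C ∧ CSNormal CS M ∧
      ∃ m h, h ∈ M.toTemporalFrame.H m ∧
        ¬ M.Sat (Form.imp
            (Form.know (Form.or (Form.box (Form.ann (Pol.var x)))
              (Form.neg (Form.box (Form.ann (Pol.var y))))))
            (Form.or (Form.ann (Pol.var x)) (Form.neg (Form.ann (Pol.var y))))) m h :=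
  stmt9_general CS x y hxy C hC
end
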